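/- Let d, μ, μ′, L ∈ ℝ with 0 < μ′ < μ, d > 0, and L > d. In ℝ² set R = (0,0), R′ = (−√3 μ′/2, μ′/2), C″ = R′ + (0, d), C = C″ + (√3 μ/2, −μ/2), N′ = R′ + (L, 0), N = N′ + (√3 μ/2, −μ/2), and let s = 2L/(μ − μ′) + √3. Then: (i) ⟪(1, s), N⟫ = 0, i.e., the line {(x, y) : y = s x} through R is perpendicular to the line RN; and (ii) the second coordinate of R′ minus s times its first coordinate is strictly positive, while the second coordinate of C minus s times its first coordinate is strictly negative — that is, C and R′ lie on strictly opposite open sides of the line y = s x. -/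

import Mathlib

open scoped RealInnerProductSpace

/-
With `δ = μ - μ'`, the translated points are `N = (L + √3 δ/2, -δ/2)` and
`C = (√3 δ/2, d - δ/2)`, so `s = 2L/δ + √3` is exactly `-N₀ / N₁`, which makes `(1, s)`
orthogonal to `N`. Since `s > 0`, the point `R'`, lying in the second quadrant, is above the
line `y = s x`; for `C` one finds `C₁ - s C₀ = d - 2δ - √3 L`, negative because `d < L ≤ √3 L`.
-/

/-- The point of `ℝ² = EuclideanSpace ℝ (Fin 2)` with coordinates `(x, y)`. -/
def pt (x y : ℝ) : EuclideanSpace ℝ (Fin 2) := WithLp.toLp 2 ![x, y]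

@[simp]
lemma pt_apply_zero (x y : ℝ) : pt x y 0 = x := rfl

@[simp]
lemma pt_apply_one (x y : ℝ) : pt x y 1 = y := rfl

lemma pt_add_pt (a b c e : ℝ) : pt a b + pt c e = pt (a + c) (b + e) := by
  ext i
  fin_cases i <;> rfl

lemma inner_pt_pt (a b c e : ℝ) : ⟪pt a b, pt c e⟫ = a * c + b * e := by
  simp only [PiLp.inner_apply, RCLike.inner_apply, conj_trivial, Fin.sum_univ_two,
    pt_apply_zero, pt_apply_one]
  ring

lemma inner_pt_one_neg_div_self (x y : ℝ) (hy : y ≠ 0) : ⟪pt 1 (-x / y), pt x y⟫ = 0 := by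
  rw [inner_pt_pt]
  field_simp
  ring

lemma one_lt_sqrt_three : (1 : ℝ) < √3 := by
  rw [Real.lt_sqrt zero_le_one]
  norm_num

theorem turingmobile_phase5_opposite_sides_general
    (d μ μ' L : ℝ) (hμ' : 0 < μ') (hμ : μ' < μ) (hd : 0 < d) (hL : d < L)
    (R' C'' C N' N : EuclideanSpace ℝ (Fin 2)) (s : ℝ)
    (hR' : R' = pt (-(Real.sqrt 3 * μ') / 2) (μ' / 2))
    (hC'' : C'' = R' + pt 0 d)
    (hC : C = C'' + pt (Real.sqrt 3 * μ / 2) (-(μ / 2)))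
    (hN' : N' = R' + pt L 0)
    (hN : N = N' + pt (Real.sqrt 3 * μ / 2) (-(μ / 2)))
    (hs : s = 2 * L / (μ - μ') + Real.sqrt 3) :
    ⟪pt 1 s, N⟫ = 0 ∧
    0 < R' 1 - s * R' 0 ∧
    C 1 - s * C 0 < 0 := by
  have hδ : 0 < μ - μ' := sub_pos.2 hμ
  have hN_eq : N = pt (L + √3 * (μ - μ') / 2) (-((μ - μ') / 2)) := by
    rw [hN, hN', hR', pt_add_pt, pt_add_pt]
    congr 1 <;> ring
  have hC_eq : C = pt (√3 * (μ - μ') / 2) (d - (μ - μ') / 2) := by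
    rw [hC, hC'', hR', pt_add_pt, pt_add_pt]
    congr 1 <;> ring
  have hs_pos : 0 < s := by
    rw [hs]
    have : 0 < L := hd.trans hL
    positivity
  refine ⟨?_, ?_, ?_⟩
  · have hs_slope : s = -(L + √3 * (μ - μ') / 2) / (-((μ - μ') / 2)) := by
      rw [hs]
      field_simp
    rw [hN_eq, hs_slope]
    exact inner_pt_one_neg_div_self _ _ (by linarith)
  · rw [hR', pt_apply_zero, pt_apply_one]
    have : 0 < s * (√3 * μ') := by positivity
    linarith
  · have hC_side : C 1 - s * C 0 = d - 2 * (μ - μ') - √3 * L := by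
      rw [hC_eq, hs, pt_apply_zero, pt_apply_one]
      field_simp
      linear_combination (-(μ - μ')) * Real.mul_self_sqrt zero_le_three
    rw [hC_side]
    nlinarith [one_lt_sqrt_three]

/-- Concluding coordinate computation of phase 5 (case `D₃`): with the current
Reference position `R` at the origin, `R′ = (−√3μ′/2, μ′/2)`,
`C″ = R′ + (0, d)`, `C = C″ + (√3μ/2, −μ/2)`, `N′ = R′ + (L, 0)`,
`N = N′ + (√3μ/2, −μ/2)` and `s = 2L/(μ−μ′) + √3`:
(i) the line `y = s x` through `R` is perpendicular to the line `RN`, i.e.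
`⟪(1, s), N⟫ = 0`; and (ii) `C` and `R′` lie on strictly opposite open sides of
the line `y = s x`. -/
theorem turingmobile_phase5_opposite_sides
    (d μ μ' L : ℝ) (hμ' : 0 < μ') (hμ : μ' < μ) (hd : 0 < d) (hL : d < L)
    (R R' C'' C N' N : EuclideanSpace ℝ (Fin 2)) (s : ℝ)
    (hR : R = pt 0 0)
    (hR' : R' = pt (-(Real.sqrt 3 * μ') / 2) (μ' / 2))
    (hC'' : C'' = R' + pt 0 d)
    (hC : C = C'' + pt (Real.sqrt 3 * μ / 2) (-(μ / 2)))
    (hN' : N' = R' + pt L 0)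
    (hN : N = N' + pt (Real.sqrt 3 * μ / 2) (-(μ / 2)))
    (hs : s = 2 * L / (μ - μ') + Real.sqrt 3) :
    ⟪pt 1 s, N⟫ = 0 ∧
    0 < R' 1 - s * R' 0 ∧
    C 1 - s * C 0 < 0 :=
  turingmobile_phase5_opposite_sides_general d μ μ' L hμ' hμ hd hL R' C'' C N' N s hR' hC'' hC hN'
    hN hs
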